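/- arXiv:0801.3592 — 7 statements merged into one kernel-verified Lean document; each statement's English description precedes it below -/
import Mathlib

section
/- Let F0 and A be n×n real symmetric matrices with F0 positive definite. Then every complex root of the univariate polynomial t ↦ det(F0 + t·A) (a polynomial in ℝ[t], with roots taken in ℂ) is real. -/
/-!
If `z` is a root, `F0 + z A` (complexified) has a kernel vector `v`. Pairing with `v̄` gives
`a + z b = 0`, where `a = v̄ᵀ F0 v > 0` (by positive definiteness applied to the real and
imaginary parts of `v`) and `b = v̄ᵀ A v` is real (by symmetry). Taking imaginary parts,
`(Im z) b = 0`; and `b ≠ 0` since otherwise `a = 0`. Hence `Im z = 0`.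
-/

open scoped Matrix ComplexOrder
open Polynomial

namespace Matrix

variable {n : Type*} [Fintype n] {𝕜 : Type*} [RCLike 𝕜]

lemma re_star_dotProduct_map_ofReal_mulVec (M : Matrix n n ℝ) (v : n → 𝕜) :
    RCLike.re (star v ⬝ᵥ M.map (algebraMap ℝ 𝕜) *ᵥ v) =
      (fun i ↦ RCLike.re (v i)) ⬝ᵥ M *ᵥ (fun i ↦ RCLike.re (v i)) +
        (fun i ↦ RCLike.im (v i)) ⬝ᵥ M *ᵥ (fun i ↦ RCLike.im (v i)) := by
  simp only [dotProduct, mulVec, map_apply, Finset.mul_sum, map_sum, ← Finset.sum_add_distrib]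
  refine Finset.sum_congr rfl fun i _ ↦ Finset.sum_congr rfl fun j _ ↦ ?_
  simp only [Pi.star_apply, RCLike.star_def, RCLike.mul_re, RCLike.conj_re, RCLike.conj_im,
    RCLike.algebraMap_eq_ofReal, RCLike.ofReal_re, RCLike.ofReal_im, RCLike.mul_im]
  ring

lemma PosDef.map_ofReal {M : Matrix n n ℝ} (hM : M.PosDef) :
    (M.map (algebraMap ℝ 𝕜)).PosDef := by
  have hherm : (M.map (algebraMap ℝ 𝕜)).IsHermitian :=
    hM.isHermitian.map _ fun r ↦ by simp
  refine .of_dotProduct_mulVec_pos hherm fun v hv ↦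
    RCLike.pos_iff.2 ⟨?_, hherm.im_star_dotProduct_mulVec_self v⟩
  rw [re_star_dotProduct_map_ofReal_mulVec]
  have hv' : (fun i ↦ RCLike.re (v i)) ≠ 0 ∨ (fun i ↦ RCLike.im (v i)) ≠ 0 := by
    contrapose! hv
    ext i
    exact RCLike.ext (by simpa using congrFun hv.1 i) (by simpa using congrFun hv.2 i)
  rcases hv' with h | h
  · exact add_pos_of_pos_of_nonneg (hM.dotProduct_mulVec_pos h)
      (hM.posSemidef.dotProduct_mulVec_nonneg _)
  · exact add_pos_of_nonneg_of_pos (hM.posSemidef.dotProduct_mulVec_nonneg _)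
      (hM.dotProduct_mulVec_pos h)

lemma im_eq_zero_of_det_add_smul_eq_zero [DecidableEq n] {F A : Matrix n n 𝕜} (hF : F.PosDef)
    (hA : A.IsHermitian) {z : 𝕜} (hz : (F + z • A).det = 0) : RCLike.im z = 0 := by
  obtain ⟨v, hv0, hv⟩ := exists_mulVec_eq_zero_iff.2 hz
  have hpair : star v ⬝ᵥ F *ᵥ v + z * (star v ⬝ᵥ A *ᵥ v) = 0 := by
    have := congrArg (star v ⬝ᵥ ·) hv
    simpa only [add_mulVec, smul_mulVec, dotProduct_add, dotProduct_smul, smul_eq_mul,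
      dotProduct_zero] using this
  have ha_pos := hF.re_dotProduct_pos hv0
  have ha_real := hF.isHermitian.im_star_dotProduct_mulVec_self v
  have hb_real := hA.im_star_dotProduct_mulVec_self v
  have him := congrArg RCLike.im hpair
  simp only [map_add, RCLike.mul_im, ha_real, hb_real, map_zero, mul_zero, zero_add] at him
  refine (mul_eq_zero.1 him).resolve_right fun hb_re ↦ ?_
  have hre := congrArg RCLike.re hpair
  simp only [map_add, RCLike.mul_re, hb_re, hb_real, mul_zero, sub_zero, add_zero, map_zero] at hre
  linarith

end Matrix

lemma Polynomial.eval_map_det_add_X_smul {n R S : Type*} [Fintype n] [DecidableEq n]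
    [CommRing R] [CommRing S] (f : R →+* S) (M N : Matrix n n R) (z : S) :
    ((M.map C + (X : R[X]) • N.map C).det.map f).eval z = (M.map f + z • N.map f).det := by
  rw [eval_map, ← coe_eval₂RingHom, RingHom.map_det]
  congr 1
  ext i j
  simp only [RingHom.mapMatrix_apply, Matrix.map_apply, Matrix.add_apply, Matrix.smul_apply,
    smul_eq_mul, coe_eval₂RingHom, eval₂_add, eval₂_mul, eval₂_X, eval₂_C]

theorem stmt0_general (n : ℕ) (F0 A : Matrix (Fin n) (Fin n) ℝ)
    (hAsymm : A.IsSymm) (hF0 : F0.PosDef) :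
    ∀ z : ℂ,
      (((F0.map (Polynomial.C : ℝ → Polynomial ℝ) +
          (Polynomial.X : Polynomial ℝ) • A.map Polynomial.C).det).map
        (algebraMap ℝ ℂ)).IsRoot z → z.im = 0 := by
  intro z hz
  rw [IsRoot, eval_map_det_add_X_smul] at hz
  have hA : (A.map (algebraMap ℝ ℂ)).IsHermitian :=
    (Matrix.isHermitian_iff_isSymm.2 hAsymm).map _ fun r ↦ by simp
  exact Matrix.im_eq_zero_of_det_add_smul_eq_zero hF0.map_ofReal hA hz

/-- Let `F0` and `A` be `n × n` real symmetric matrices with `F0`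
positive definite. Then every complex root of the univariate polynomial
`t ↦ det (F0 + t • A)` (a polynomial in `ℝ[t]`, roots taken in `ℂ`) is real. -/
theorem stmt0 (n : ℕ) (F0 A : Matrix (Fin n) (Fin n) ℝ)
    (hF0symm : F0.IsSymm) (hAsymm : A.IsSymm) (hF0 : F0.PosDef) :
    ∀ z : ℂ,
      (((F0.map (Polynomial.C : ℝ → Polynomial ℝ) +
          (Polynomial.X : Polynomial ℝ) • A.map Polynomial.C).det).map
        (algebraMap ℝ ℂ)).IsRoot z → z.im = 0 :=
  stmt0_general n F0 A hAsymm hF0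
end

section
/- Let F0, F1, …, Fn be m×m real symmetric matrices with F0 positive semidefinite, and define p(x) = det(F0 + x1·F1 + … + xn·Fn) for x ∈ ℝⁿ. Then for every z ∈ ℝⁿ such that the univariate polynomial t ↦ p(t·z) is not the zero polynomial, every complex root of t ↦ p(t·z) is real; in particular, if F0 is positive definite then p satisfies the real zero condition at the origin. -/
/-!
If `det (F₀ + w • A) = 0` with `A = ∑ zᵢ • Fᵢ`, pick a complex kernel vector `v`. Then
`v* F₀ v + w · v* A v = 0`, and both quadratic forms are real because `F₀` and `A` are
Hermitian over `ℂ`. If `v* A v ≠ 0` this forces `w` to be real. Otherwise `v* F₀ v = 0`, so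
`F₀ v = 0` by positive semidefiniteness, and then `A v = 0` unless `w = 0`. In that case `v` lies
in the kernel of every `F₀ + t • A`, so the polynomial vanishes identically. When `F₀` is
positive definite, the polynomial takes the value `det F₀ ≠ 0` at `0`.
-/

open Polynomial Matrix
open scoped ComplexOrder

section

variable {ι : Type*}

theorem Matrix.IsSymm.isHermitian_map_ofReal {A : Matrix ι ι ℝ} (hA : A.IsSymm) :
    (A.map (algebraMap ℝ ℂ)).IsHermitian :=
  (isHermitian_iff_isSymm.mpr hA).map _ fun _ => (Complex.conj_ofReal _).symm

theorem Matrix.isSymm_sum {κ α : Type*} [AddCommMonoid α] (s : Finset κ)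
    {A : κ → Matrix ι ι α} (h : ∀ i ∈ s, (A i).IsSymm) : (∑ i ∈ s, A i).IsSymm := by
  rw [IsSymm, transpose_sum]
  exact Finset.sum_congr rfl fun i hi => (h i hi).eq

theorem Matrix.sum_C_mul_X_smul_map_C {R κ : Type*} [CommRing R] [Fintype κ] (z : κ → R)
    (F : κ → Matrix ι ι R) :
    ∑ i, (C (z i) * X) • (F i).map (C : R → R[X]) =
      (X : R[X]) • (∑ i, z i • F i).map C := by
  refine Matrix.ext fun j k => ?_
  simp only [sum_apply, smul_apply, map_apply, smul_eq_mul, map_sum, _root_.map_mul,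
    Finset.mul_sum]
  exact Finset.sum_congr rfl fun i _ => by ring

variable [Fintype ι] [DecidableEq ι]

theorem Matrix.PosSemidef.map_ofReal {A : Matrix ι ι ℝ} (hA : A.PosSemidef) :
    (A.map (algebraMap ℝ ℂ)).PosSemidef := by
  obtain ⟨B, rfl⟩ : ∃ B : Matrix ι ι ℝ, A = Bᴴ * B := by
    open scoped MatrixOrder in exact CStarAlgebra.nonneg_iff_eq_star_mul_self.mp hA.nonneg
  rw [Matrix.map_mul, conjTranspose_map (algebraMap ℝ ℂ) fun _ => (Complex.conj_ofReal _).symm]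
  exact posSemidef_conjTranspose_mul_self _

theorem Matrix.im_eq_zero_or_forall_det_add_smul_eq_zero {𝕜 : Type*} [RCLike 𝕜]
    {A B : Matrix ι ι 𝕜} (hA : A.PosSemidef) (hB : B.IsHermitian) {w : 𝕜}
    (hw : (A + w • B).det = 0) :
    RCLike.im w = 0 ∨ ∀ t : 𝕜, (A + t • B).det = 0 := by
  obtain ⟨v, hv0, hv⟩ := exists_mulVec_eq_zero_iff.mpr hw
  rw [add_mulVec, smul_mulVec] at hv
  have hform : star v ⬝ᵥ A *ᵥ v + w * (star v ⬝ᵥ B *ᵥ v) = 0 := by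
    simpa [dotProduct_add, dotProduct_smul] using congrArg (star v ⬝ᵥ ·) hv
  have hA_im := hA.isHermitian.im_star_dotProduct_mulVec_self v
  have hB_im := hB.im_star_dotProduct_mulVec_self v
  by_cases hB_form : star v ⬝ᵥ B *ᵥ v = 0
  · rw [hB_form, mul_zero, add_zero, hA.dotProduct_mulVec_zero_iff] at hform
    rw [hform, zero_add, smul_eq_zero] at hv
    rcases hv with rfl | hBv
    · simp
    refine Or.inr fun t => exists_mulVec_eq_zero_iff.mp ⟨v, hv0, ?_⟩
    simp [add_mulVec, smul_mulVec, hform, hBv]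
  · left
    have hB_re : RCLike.re (star v ⬝ᵥ B *ᵥ v) ≠ 0 :=
      fun h => hB_form (RCLike.ext (by simpa) (by simpa))
    have him := congrArg RCLike.im hform
    simp only [map_add, RCLike.mul_im, hA_im, hB_im, map_zero] at him
    exact (mul_eq_zero.mp (by linarith : RCLike.im w * _ = 0)).resolve_right hB_re

variable {R : Type*} [CommRing R]

noncomputable def Matrix.detPencil (A B : Matrix ι ι R) : R[X] :=
  (A.map C + (X : R[X]) • B.map C).det

theorem Matrix.eval₂_detPencil {S : Type*} [CommRing S] (f : R →+* S) (t : S)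
    (A B : Matrix ι ι R) :
    (detPencil A B).eval₂ f t = (A.map f + t • B.map f).det := by
  rw [detPencil, ← coe_eval₂RingHom, RingHom.map_det]
  congr 1
  refine Matrix.ext fun j k => ?_
  simpa using mul_comm _ _

theorem Matrix.eval_zero_detPencil (A B : Matrix ι ι R) : (detPencil A B).eval 0 = A.det := by
  simp [eval, eval₂_detPencil]

theorem Matrix.im_eq_zero_of_isRoot_detPencil {A B : Matrix ι ι ℝ}
    (hA : A.PosSemidef) (hB : B.IsSymm) (hp : detPencil A B ≠ 0) {w : ℂ}
    (hw : ((detPencil A B).map (algebraMap ℝ ℂ)).IsRoot w) : w.im = 0 := by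
  rw [IsRoot, eval_map, eval₂_detPencil] at hw
  refine (im_eq_zero_or_forall_det_add_smul_eq_zero hA.map_ofReal hB.isHermitian_map_ofReal hw
    ).resolve_right fun h => hp ?_
  refine (Polynomial.map_eq_zero_iff (algebraMap ℝ ℂ).injective).mp
    (zero_of_eval_zero _ fun t => ?_)
  rw [eval_map, eval₂_detPencil]
  exact h t

end

theorem stmt1_general (n m : ℕ) (F0 : Matrix (Fin m) (Fin m) ℝ)
    (F : Fin n → Matrix (Fin m) (Fin m) ℝ)
    (hFsymm : ∀ i, (F i).IsSymm) (hF0 : F0.PosSemidef)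
    (q : (Fin n → ℝ) → Polynomial ℝ)
    (hq : ∀ z : Fin n → ℝ,
      q z = (F0.map (Polynomial.C : ℝ → Polynomial ℝ) +
        ∑ i : Fin n, (Polynomial.C (z i) * Polynomial.X) • (F i).map Polynomial.C).det) :
    (∀ z : Fin n → ℝ, q z ≠ 0 →
      ∀ w : ℂ, ((q z).map (algebraMap ℝ ℂ)).IsRoot w → w.im = 0) ∧
    (F0.PosDef →
      ∀ z : Fin n → ℝ, ∀ w : ℂ, ((q z).map (algebraMap ℝ ℂ)).IsRoot w → w.im = 0) := by
  have hq_pencil (z : Fin n → ℝ) : q z = detPencil F0 (∑ i, z i • F i) := by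
    rw [hq, sum_C_mul_X_smul_map_C, detPencil]
  have real_roots (z : Fin n → ℝ) (hz : q z ≠ 0) (w : ℂ)
      (hw : ((q z).map (algebraMap ℝ ℂ)).IsRoot w) : w.im = 0 := by
    rw [hq_pencil] at hz hw
    have hA : (∑ i, z i • F i).IsSymm := isSymm_sum _ fun i _ => (hFsymm i).smul (z i)
    exact im_eq_zero_of_isRoot_detPencil hF0 hA hz hw
  refine ⟨real_roots, fun hpd z => real_roots z fun hz => hpd.det_pos.ne' ?_⟩
  rw [← eval_zero_detPencil F0 (∑ i, z i • F i), ← hq_pencil, hz, eval_zero]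

/-- Let `F0, F1, …, Fn` be `m × m` real symmetric matrices with `F0`
positive semidefinite, and `p x = det (F0 + x 1 • F 1 + ⋯ + x n • F n)`. Then for every
`z ∈ ℝⁿ` such that the univariate polynomial `t ↦ p (t • z)` is not the zero polynomial,
every complex root of `t ↦ p (t • z)` is real; in particular, if `F0` is positive
definite then `p` satisfies the real zero condition at the origin. -/
theorem stmt1 (n m : ℕ) (F0 : Matrix (Fin m) (Fin m) ℝ)
    (F : Fin n → Matrix (Fin m) (Fin m) ℝ)
    (hF0symm : F0.IsSymm) (hFsymm : ∀ i, (F i).IsSymm) (hF0 : F0.PosSemidef)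
    (q : (Fin n → ℝ) → Polynomial ℝ)
    (hq : ∀ z : Fin n → ℝ,
      q z = (F0.map (Polynomial.C : ℝ → Polynomial ℝ) +
        ∑ i : Fin n, (Polynomial.C (z i) * Polynomial.X) • (F i).map Polynomial.C).det) :
    (∀ z : Fin n → ℝ, q z ≠ 0 →
      ∀ w : ℂ, ((q z).map (algebraMap ℝ ℂ)).IsRoot w → w.im = 0) ∧
    (F0.PosDef →
      ∀ z : Fin n → ℝ, ∀ w : ℂ, ((q z).map (algebraMap ℝ ℂ)).IsRoot w → w.im = 0) :=
  stmt1_general n m F0 F hFsymm hF0 q hq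
end

section
/- Let q ∈ ℝ[t] be monic of degree m ≥ 1 and let x1, …, xm ∈ ℂ be its roots counted with multiplicity. For k ∈ ℕ let N_k = x1^k + … + xm^k be the k-th Newton sum. Then each N_k is a real number, and q has only real roots (i.e., q splits over ℝ) if and only if the m×m real Hankel matrix H with entries H_{ij} = N_{i+j}, for 0 ≤ i, j ≤ m−1, is positive semidefinite. -/
/-! Since `q` has real coefficients, its complex roots are stable under conjugation, so the
Newton sums are real. For `x ∈ ℝᵐ` put `pₓ = ∑ xᵢ tⁱ`; then `xᵀ H x = Re ∑_r pₓ(r)²`, summed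
over the roots. If all roots are real this is a sum of squares. If `z` is a non-real root, take a
complex `P` of degree `< m` vanishing at the other roots with `P(z) = 2i` (a Lagrange basis
polynomial) and let `x` be the real parts of its coefficients: then
`pₓ(r) = (P(r) + conj P(conj r)) / 2` is `i` at `z`, `-i` at `conj z` and `0` at the other roots,
so `xᵀ H x < 0`. -/

open Polynomial Matrix ComplexConjugate

theorem Complex.re_multiset_sum (s : Multiset ℂ) : s.sum.re = (s.map Complex.re).sum :=
  map_multiset_sum Complex.reAddGroupHom s

theorem im_sum_map_pow_eq_zero {s : Multiset ℂ} (hs : s.map conj = s) (k : ℕ) :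
    ((s.map (· ^ k)).sum).im = 0 := by
  rw [← Complex.conj_eq_iff_im, map_multiset_sum, Multiset.map_map]
  conv_rhs => rw [← hs, Multiset.map_map]
  simp

theorem map_conj_roots_map_ofReal (q : ℝ[X]) :
    (q.map (algebraMap ℝ ℂ)).roots.map conj = (q.map (algebraMap ℝ ℂ)).roots := by
  rw [roots_map_of_injective_of_card_eq_natDegree (starRingEnd ℂ).injective
    IsAlgClosed.card_roots_eq_natDegree, Polynomial.map_map]
  congr 2
  exact RingHom.ext Complex.conj_ofReal

theorem sum_re_coeff_mul_pow {m : ℕ} {P : ℂ[X]} (hP : P.natDegree < m) (r : ℂ) :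
    ∑ i : Fin m, ((P.coeff i).re : ℂ) * r ^ (i : ℕ) =
      (P.eval r + conj (P.eval (conj r))) / 2 := by
  simp_rw [eval_eq_sum_range' hP, map_sum, map_mul, map_pow, Complex.conj_conj,
    Complex.re_eq_add_conj, ← Finset.sum_add_distrib, Finset.sum_div, Finset.sum_range]
  refine Finset.sum_congr rfl fun i _ => ?_
  ring

noncomputable def hermiteMatrix (s : Multiset ℂ) (m : ℕ) : Matrix (Fin m) (Fin m) ℝ :=
  Matrix.of fun i j => ((s.map (· ^ ((i : ℕ) + j))).sum).re

theorem dotProduct_hermiteMatrix_mulVec (s : Multiset ℂ) {m : ℕ} (x : Fin m → ℝ) :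
    x ⬝ᵥ hermiteMatrix s m *ᵥ x =
      ((s.map fun r => (∑ i, (x i : ℂ) * r ^ (i : ℕ)) ^ 2).sum).re := by
  have hsq (r : ℂ) : (∑ i, (x i : ℂ) * r ^ (i : ℕ)) ^ 2 =
      ∑ i, ∑ j, ((x i * x j : ℝ) : ℂ) * r ^ ((i : ℕ) + j) := by
    rw [sq, Finset.sum_mul_sum]
    refine Finset.sum_congr rfl fun i _ => Finset.sum_congr rfl fun j _ => ?_
    push_cast
    ring
  simp_rw [hsq, Multiset.sum_map_sum, Multiset.sum_map_mul_left, Complex.re_sum,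
    Complex.re_ofReal_mul]
  simp only [dotProduct, mulVec, hermiteMatrix, of_apply, Finset.mul_sum]
  refine Finset.sum_congr rfl fun i _ => Finset.sum_congr rfl fun j _ => ?_
  ring

theorem hermiteMatrix_isHermitian (s : Multiset ℂ) (m : ℕ) :
    (hermiteMatrix s m).IsHermitian := by
  ext i j
  simp [hermiteMatrix, add_comm]

theorem posSemidef_hermiteMatrix_of_forall_im_eq_zero {s : Multiset ℂ}
    (hs : ∀ z ∈ s, z.im = 0) (m : ℕ) : (hermiteMatrix s m).PosSemidef := by
  refine posSemidef_iff_dotProduct_mulVec.2 ⟨hermiteMatrix_isHermitian s m, fun x => ?_⟩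
  rw [star_trivial, dotProduct_hermiteMatrix_mulVec, Complex.re_multiset_sum, Multiset.map_map]
  refine Multiset.sum_nonneg fun _ hv => ?_
  obtain ⟨r, hr, rfl⟩ := Multiset.mem_map.1 hv
  obtain ⟨t, rfl⟩ : ∃ t : ℝ, r = t := ⟨r.re, Complex.ext rfl (hs r hr)⟩
  have hreal : ∑ i, (x i : ℂ) * (t : ℂ) ^ (i : ℕ) = ((∑ i, x i * t ^ (i : ℕ) : ℝ) : ℂ) := by
    push_cast; rfl
  rw [Function.comp_apply, hreal, ← Complex.ofReal_pow, Complex.ofReal_re]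
  positivity

theorem exists_dotProduct_hermiteMatrix_mulVec_neg {s : Multiset ℂ} {m : ℕ}
    (hs : s.map conj = s) (hm : Multiset.card s ≤ m) {z : ℂ} (hz : z ∈ s) (him : z.im ≠ 0) :
    ∃ x : Fin m → ℝ, x ⬝ᵥ hermiteMatrix s m *ᵥ x < 0 := by
  classical
  set P : ℂ[X] := C (2 * Complex.I) * Lagrange.basis s.toFinset id z
  have hinj : Set.InjOn id (s.toFinset : Set ℂ) := Set.injOn_id _
  have hzs : z ∈ s.toFinset := Multiset.mem_toFinset.2 hz
  have hPdeg : P.natDegree < m := by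
    calc P.natDegree ≤ s.toFinset.card - 1 :=
          natDegree_C_mul_le _ _ |>.trans (Lagrange.natDegree_basis hinj hzs).le
      _ < s.toFinset.card := Nat.sub_lt (Finset.card_pos.2 ⟨z, hzs⟩) one_pos
      _ ≤ m := (Multiset.toFinset_card_le s).trans hm
  have hP (w : ℂ) (hw : w ∈ s) : P.eval w = if w = z then 2 * Complex.I else 0 := by
    have hbasis : (Lagrange.basis s.toFinset id z).eval w = if w = z then 1 else 0 := by
      split_ifs with hwz
      · subst hwz
        exact Lagrange.eval_basis_self (v := id) hinj hzs
      · exact Lagrange.eval_basis_of_ne (v := id) (Ne.symm hwz) (Multiset.mem_toFinset.2 hw)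
    simp [P, hbasis]
  have hconj (w : ℂ) (hw : w ∈ s) : conj w ∈ s := hs ▸ Multiset.mem_map_of_mem _ hw
  refine ⟨fun i => (P.coeff i).re, ?_⟩
  simp_rw [dotProduct_hermiteMatrix_mulVec, sum_re_coeff_mul_pow hPdeg, Complex.re_multiset_sum,
    Multiset.map_map]
  refine (Multiset.sum_lt_sum (g := fun _ => 0) (fun w hw => ?_) ⟨z, hz, ?_⟩).trans_eq
    (by simp)
  · simp only [Function.comp_apply, hP w hw, hP _ (hconj w hw)]
    split_ifs <;> simp [sq]
  · have hzz : conj z ≠ z := mt Complex.conj_eq_iff_im.1 him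
    simp [hP z hz, hP _ (hconj z hz), hzz, sq]

theorem posSemidef_hermiteMatrix_iff {s : Multiset ℂ} {m : ℕ} (hs : s.map conj = s)
    (hm : Multiset.card s ≤ m) : (hermiteMatrix s m).PosSemidef ↔ ∀ z ∈ s, z.im = 0 := by
  refine ⟨fun hH z hz => ?_, fun h => posSemidef_hermiteMatrix_of_forall_im_eq_zero h m⟩
  by_contra him
  obtain ⟨x, hx⟩ := exists_dotProduct_hermiteMatrix_mulVec_neg hs hm hz him
  have hnonneg := (posSemidef_iff_dotProduct_mulVec.1 hH).2 x
  rw [star_trivial] at hnonneg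
  exact hx.not_ge hnonneg

theorem stmt5_general (m : ℕ) (q : Polynomial ℝ)
    (hdeg : q.natDegree = m)
    (N : ℕ → ℂ)
    (hN : ∀ k : ℕ, N k = (((q.map (algebraMap ℝ ℂ)).roots.map (fun z => z ^ k)).sum)) :
    (∀ k : ℕ, (N k).im = 0) ∧
    ((∀ z ∈ (q.map (algebraMap ℝ ℂ)).roots, z.im = 0) ↔
      (Matrix.of fun i j : Fin m => (N ((i : ℕ) + (j : ℕ))).re).PosSemidef) := by
  obtain rfl : N = fun k => ((q.map (algebraMap ℝ ℂ)).roots.map (· ^ k)).sum := funext hN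
  have hconj := map_conj_roots_map_ofReal q
  have hcard : Multiset.card (q.map (algebraMap ℝ ℂ)).roots ≤ m :=
    hdeg ▸ (card_roots' _).trans natDegree_map_le
  exact ⟨im_sum_map_pow_eq_zero hconj, (posSemidef_hermiteMatrix_iff hconj hcard).symm⟩

/-- Let `q ∈ ℝ[t]` be monic of degree `m ≥ 1` with complex roots
`x1, …, xm` counted with multiplicity, and `N k = x1^k + ⋯ + xm^k` the Newton sums.
Then each `N k` is real, and `q` has only real roots if and only if the `m × m` Hankel
(Hermite) matrix `H i j = N (i + j)`, `0 ≤ i, j ≤ m − 1`, is positive semidefinite. -/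
theorem stmt5 (m : ℕ) (hm : 1 ≤ m) (q : Polynomial ℝ) (hq : q.Monic)
    (hdeg : q.natDegree = m)
    (N : ℕ → ℂ)
    (hN : ∀ k : ℕ, N k = (((q.map (algebraMap ℝ ℂ)).roots.map (fun z => z ^ k)).sum)) :
    (∀ k : ℕ, (N k).im = 0) ∧
    ((∀ z ∈ (q.map (algebraMap ℝ ℂ)).roots, z.im = 0) ↔
      (Matrix.of fun i j : Fin m => (N ((i : ℕ) + (j : ℕ))).re).PosSemidef) :=
  stmt5_general m q hdeg N hN
end

section
/- Let q0, q1, q2 ∈ ℝ[u] have degree at most m ≥ 1, define the symmetric m×m matrix pencil F(x1,x2) = B_m(q1 − x1·q0, q2 − x2·q0), and let p(x1,x2) = det F(x1,x2), a bivariate real polynomial. Then p vanishes at every point of the rationally parametrized curve: for every u ∈ ℝ with q0(u) ≠ 0, p(q1(u)/q0(u), q2(u)/q0(u)) = 0. -/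
/-- The Bézout matrix `B_m(g,h)` of two univariate polynomials of degree at most `m`:
the `m × m` symmetric matrix `(b_{kl})` determined by
`g(u)h(v) − g(v)h(u) = (u − v) ∑_{k,l=0}^{m−1} b_{kl} u^k v^l`. Working in `R[v][u]`
(outer variable `u`, inner variable `v`), `u − v` is the monic polynomial `X − C X`, and
`b_{kl}` is the coefficient of `u^k v^l` of the exact quotient. -/
noncomputable def bezoutMatrix (R : Type*) [CommRing R] (m : ℕ) (g h : Polynomial R) :
    Matrix (Fin m) (Fin m) R :=
  Matrix.of fun k l : Fin m =>
    (((g.map (Polynomial.C : R →+* Polynomial R) * Polynomial.C h -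
        Polynomial.C g * h.map (Polynomial.C : R →+* Polynomial R)) /ₘ
      (Polynomial.X - Polynomial.C Polynomial.X)).coeff (k : ℕ)).coeff (l : ℕ)

/-! If `a` is a common root of `g` and `h`, substituting `u = a` in
`g(u) h(v) − g(v) h(u) = (u − v) ∑ b_{kl} u^k v^l` kills the left side, so
`(1, a, …, a^{m−1})` is a left null vector of `B_m(g, h)`. At `x_i = q_i(u) / q_0(u)` the
polynomials `q_i − x_i q_0` share the root `u`. -/

open Polynomial

namespace Polynomial

variable {R : Type*} [CommRing R]

noncomputable def bezoutNumerator (g h : R[X]) : R[X][X] :=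
  g.map C * C h - C g * h.map C

lemma eval_C_bezoutNumerator (g h : R[X]) (a : R) :
    (bezoutNumerator g h).eval (C a) = C (g.eval a) * h - g * C (h.eval a) := by
  simp [bezoutNumerator, eval_map, eval₂_at_apply]

lemma isRoot_bezoutNumerator (g h : R[X]) : (bezoutNumerator g h).IsRoot X := by
  simp [IsRoot, bezoutNumerator, eval_map, eval₂_C_X, mul_comm]

lemma natDegree_bezoutNumerator_le {m : ℕ} {g h : R[X]} (hg : g.degree ≤ m)
    (hh : h.degree ≤ m) : (bezoutNumerator g h).natDegree ≤ m := by
  have hg' : (g.map C * C h).degree ≤ m := by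
    simpa using (degree_mul_le _ _).trans (add_le_add (degree_map_le.trans hg) degree_C_le)
  have hh' : (C g * h.map C).degree ≤ m := by
    simpa using (degree_mul_le _ _).trans (add_le_add degree_C_le (degree_map_le.trans hh))
  exact natDegree_le_of_degree_le (degree_sub_le_of_le hg' hh' |>.trans (by simp))

noncomputable def bezoutian (g h : R[X]) : R[X][X] :=
  bezoutNumerator g h /ₘ (X - C X)

lemma bezoutMatrix_apply (m : ℕ) (g h : R[X]) (k l : Fin m) :
    bezoutMatrix R m g h k l = ((bezoutian g h).coeff k).coeff l :=
  rfl

lemma X_sub_C_X_mul_bezoutian (g h : R[X]) :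
    (X - C X) * bezoutian g h = bezoutNumerator g h :=
  mul_divByMonic_eq_iff_isRoot.2 (isRoot_bezoutNumerator g h)

lemma natDegree_bezoutian_lt [Nontrivial R] {m : ℕ} (hm : 0 < m) {g h : R[X]}
    (hg : g.degree ≤ m) (hh : h.degree ≤ m) : (bezoutian g h).natDegree < m := by
  have := natDegree_bezoutNumerator_le hg hh
  rw [bezoutian, natDegree_divByMonic _ (monic_X_sub_C _), natDegree_X_sub_C]
  omega

lemma eval_C_bezoutian_eq_zero [IsDomain R] {g h : R[X]} {a : R} (hg : g.IsRoot a)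
    (hh : h.IsRoot a) : (bezoutian g h).eval (C a) = 0 := by
  have := congrArg (eval (C a)) (X_sub_C_X_mul_bezoutian g h)
  rw [eval_mul, eval_C_bezoutNumerator, hg.eq_zero, hh.eq_zero] at this
  simpa [sub_eq_zero, (X_ne_C a).symm] using this

lemma vecMul_pow_bezoutMatrix {m : ℕ} {g h : R[X]} (hgh : (bezoutian g h).natDegree < m)
    (a : R) : Matrix.vecMul (fun k : Fin m => a ^ (k : ℕ)) (bezoutMatrix R m g h) =
      fun l : Fin m => ((bezoutian g h).eval (C a)).coeff l := by
  ext l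
  rw [eval_eq_sum_range' hgh, finsetSum_coeff, ← Fin.sum_univ_eq_sum_range]
  simp only [Matrix.vecMul, dotProduct, bezoutMatrix_apply, ← C_pow, coeff_mul_C, mul_comm]

theorem det_bezoutMatrix_eq_zero_of_isRoot [IsDomain R] {m : ℕ} (hm : 0 < m) {g h : R[X]}
    (hg : g.degree ≤ m) (hh : h.degree ≤ m) {a : R} (hga : g.IsRoot a) (hha : h.IsRoot a) :
    (bezoutMatrix R m g h).det = 0 := by
  refine Matrix.exists_vecMul_eq_zero_iff.1 ⟨fun k : Fin m => a ^ (k : ℕ), ?_, ?_⟩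
  · exact fun h0 => by simpa using congrFun h0 ⟨0, hm⟩
  · rw [vecMul_pow_bezoutMatrix (natDegree_bezoutian_lt hm hg hh),
      eval_C_bezoutian_eq_zero hga hha]
    rfl

end Polynomial

/-- Let `q0, q1, q2 ∈ ℝ[u]` have degree at most `m ≥ 1`, define the
symmetric pencil `F(x1,x2) = B_m(q1 − x1 q0, q2 − x2 q0)` and `p = det F`. Then `p`
vanishes at every point of the rationally parametrized curve: for every `u ∈ ℝ` with
`q0(u) ≠ 0`, `p (q1(u)/q0(u), q2(u)/q0(u)) = 0`. -/
theorem stmt11 (m : ℕ) (hm : 1 ≤ m) (q0 q1 q2 : Polynomial ℝ)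
    (hq0 : q0.degree ≤ m) (hq1 : q1.degree ≤ m) (hq2 : q2.degree ≤ m)
    (F : ℝ → ℝ → Matrix (Fin m) (Fin m) ℝ)
    (hF : ∀ x1 x2 : ℝ, F x1 x2 = bezoutMatrix ℝ m (q1 - x1 • q0) (q2 - x2 • q0))
    (p : ℝ → ℝ → ℝ) (hp : ∀ x1 x2 : ℝ, p x1 x2 = (F x1 x2).det) :
    ∀ u : ℝ, q0.eval u ≠ 0 →
      p (q1.eval u / q0.eval u) (q2.eval u / q0.eval u) = 0 := by
  intro u hu
  have hdeg : ∀ (q : ℝ[X]) (x : ℝ), q.degree ≤ m → (q - x • q0).degree ≤ m := fun q x hq =>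
    (degree_sub_le_of_le hq ((degree_smul_le x q0).trans hq0)).trans (max_self _).le
  have hroot : ∀ q : ℝ[X], (q - (q.eval u / q0.eval u) • q0).IsRoot u := fun q => by
    simp [IsRoot, div_mul_cancel₀ _ hu]
  rw [hp, hF]
  exact det_bezoutMatrix_eq_zero_of_isRoot hm (hdeg q1 _ hq1) (hdeg q2 _ hq2)
    (hroot q1) (hroot q2)
end

section
/- For every nonzero z = (z1, z2) ∈ ℝ², the univariate real polynomial t ↦ 1 − z1⁴·t⁴ − z2⁴·t⁴ has degree 4, exactly two of its four complex roots (counted with multiplicity) are real, and it has a non-real complex root. Consequently the polynomial p(x1,x2) = 1 − x1⁴ − x2⁴ does not satisfy the real zero condition at the origin. -/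
open Polynomial

lemma aux15 (c : ℝ) (hc : 0 < c) :
    (1 - C c * X ^ 4 : Polynomial ℝ).degree = 4 ∧
    ((((1 - C c * X ^ 4 : Polynomial ℝ)).map (algebraMap ℝ ℂ)).roots.filter
      (fun w : ℂ => w.im = 0)).card = 2 ∧
    ∃ w ∈ (((1 - C c * X ^ 4 : Polynomial ℝ)).map (algebraMap ℝ ℂ)).roots, w.im ≠ 0 := by
  have hc' : c ≠ 0 := ne_of_gt hc
  set r : ℝ := c⁻¹ ^ (1/4 : ℝ) with hr
  have hrpos : 0 < r := Real.rpow_pos_of_pos (inv_pos.2 hc) _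
  have hr4 : r ^ (4:ℕ) = c⁻¹ := by
    rw [hr, ← Real.rpow_natCast (c⁻¹ ^ (1/4:ℝ)) 4, ← Real.rpow_mul (le_of_lt (inv_pos.2 hc))]
    norm_num
  have ha4 : ((r:ℂ)) ^ (4:ℕ) = ((c:ℂ))⁻¹ := by
    rw [← Complex.ofReal_pow, hr4, Complex.ofReal_inv]
  have hCI : (C Complex.I) ^ 2 = (-1 : Polynomial ℂ) := by
    rw [← map_pow, Complex.I_sq, map_neg, map_one]
  have hfac : ((1 - C c * X ^ 4 : Polynomial ℝ)).map (algebraMap ℝ ℂ) =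
      C (-(c:ℂ)) * (({(r:ℂ), -(r:ℂ), (r:ℂ)*Complex.I, -((r:ℂ)*Complex.I)} : Multiset ℂ).map
        (fun x => X - C x)).prod := by
    simp only [Multiset.insert_eq_cons, Multiset.map_cons, Multiset.prod_cons,
      Multiset.map_singleton, Multiset.prod_singleton]
    rw [Polynomial.map_sub, Polynomial.map_one, Polynomial.map_mul, Polynomial.map_pow,
      map_C, Polynomial.map_X]
    have : (algebraMap ℝ ℂ) c = (c:ℂ) := rfl
    rw [this]
    have key : (X - C (r:ℂ)) * ((X - C (-(r:ℂ))) * ((X - C ((r:ℂ)*Complex.I)) *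
        (X - C (-((r:ℂ)*Complex.I))))) = X^4 - C ((r:ℂ)^4) := by
      simp only [map_neg, map_mul, map_pow]
      linear_combination ((C (r:ℂ))^4 - (C (r:ℂ))^2 * X^2) * hCI
    rw [key, ha4]
    have hcc : (c:ℂ) ≠ 0 := by exact_mod_cast hc'
    rw [mul_sub, ← map_mul]
    simp only [map_neg, neg_mul, mul_inv_cancel₀ hcc, map_one]
    ring
  have hroots : (((1 - C c * X ^ 4 : Polynomial ℝ)).map (algebraMap ℝ ℂ)).roots =
      ({(r:ℂ), -(r:ℂ), (r:ℂ)*Complex.I, -((r:ℂ)*Complex.I)} : Multiset ℂ) := by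
    rw [hfac, roots_C_mul _ (by exact_mod_cast neg_ne_zero.2 hc'),
      roots_multiset_prod_X_sub_C]
  refine ⟨?_, ?_, ?_⟩
  · compute_degree!
  · rw [hroots]
    have h1 : ((r:ℂ)*Complex.I).im = r := by simp
    simp [Multiset.insert_eq_cons, Multiset.filter_cons, Multiset.filter_singleton,
      ne_of_gt hrpos, hrpos.ne', neg_eq_zero]
  · refine ⟨(r:ℂ)*Complex.I, ?_, ?_⟩
    · rw [hroots]; simp
    · simpa using ne_of_gt hrpos

/-- For every nonzero `z = (z1, z2) ∈ ℝ²`, the polynomial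
`t ↦ 1 − z1⁴ t⁴ − z2⁴ t⁴` has degree `4`, exactly two of its four complex roots (with
multiplicity) are real, and it has a non-real root. Consequently `p = 1 − x1⁴ − x2⁴`
does not satisfy the real zero condition at the origin. -/
theorem stmt15 (q : (Fin 2 → ℝ) → Polynomial ℝ)
    (hq : ∀ z : Fin 2 → ℝ, q z =
      1 - Polynomial.C (z 0 ^ 4) * Polynomial.X ^ 4 -
        Polynomial.C (z 1 ^ 4) * Polynomial.X ^ 4)
    (p : MvPolynomial (Fin 2) ℝ)
    (hp : p = 1 - MvPolynomial.X 0 ^ 4 - MvPolynomial.X 1 ^ 4) :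
    (∀ z : Fin 2 → ℝ, z ≠ 0 →
      (q z).degree = 4 ∧
      (((q z).map (algebraMap ℝ ℂ)).roots.filter (fun w : ℂ => w.im = 0)).card = 2 ∧
      ∃ w ∈ ((q z).map (algebraMap ℝ ℂ)).roots, w.im ≠ 0) ∧
    ¬ (∀ z : Fin 2 → ℝ, ∀ w : ℂ,
        ((MvPolynomial.aeval (fun i : Fin 2 => Polynomial.C (z i) * Polynomial.X) p :
          Polynomial ℝ).map (algebraMap ℝ ℂ)).IsRoot w → w.im = 0) := by
  have main : ∀ z : Fin 2 → ℝ, z ≠ 0 →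
      (q z).degree = 4 ∧
      (((q z).map (algebraMap ℝ ℂ)).roots.filter (fun w : ℂ => w.im = 0)).card = 2 ∧
      ∃ w ∈ ((q z).map (algebraMap ℝ ℂ)).roots, w.im ≠ 0 := by
    intro z hz
    have hqz : q z = 1 - C (z 0 ^ 4 + z 1 ^ 4) * X ^ 4 := by
      rw [hq z, map_add, add_mul, sub_sub]
    have hpos : 0 < z 0 ^ 4 + z 1 ^ 4 := by
      rcases Function.ne_iff.1 hz with ⟨i, hi⟩
      have h0 : (0:ℝ) ≤ z 0 ^ 4 := by positivity
      have h1 : (0:ℝ) ≤ z 1 ^ 4 := by positivity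
      have hi4 : 0 < z i ^ 4 :=
        lt_of_le_of_ne (by positivity) (Ne.symm (pow_ne_zero 4 hi))
      fin_cases i <;> simp at hi4 ⊢ <;> linarith
    rw [hqz]
    exact aux15 _ hpos
  refine ⟨main, fun H => ?_⟩
  set z : Fin 2 → ℝ := fun _ => 1 with hzdef
  have hz : z ≠ 0 := by
    intro h
    have := congrFun h 0
    simp [hzdef] at this
  have heq : (MvPolynomial.aeval (fun i : Fin 2 => Polynomial.C (z i) * Polynomial.X) p :
      Polynomial ℝ) = q z := by
    rw [hp, hq z]
    simp [mul_pow, ← C_pow, hzdef]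
  obtain ⟨-, -, w, hw, hwim⟩ := main z hz
  exact hwim (H z w (by rw [heq]; exact isRoot_of_mem_roots hw))
end

section
/- There do not exist an integer m ≥ 1 and real symmetric m×m matrices F0, F1, F2 with F0 positive semidefinite such that det(F0 + x1·F1 + x2·F2) = 1 − x1⁴ − x2⁴ for all (x1, x2) ∈ ℝ². -/
/-!
Along the diagonal `x₁ = x₂ = t` a representation would give `det (F₀ + t M) = 1 - 2 t⁴` with
`M = F₁ + F₂`, and `det F₀ = 1` makes `F₀` positive definite. A pencil with positive definite
constant term and Hermitian slope has only real roots: if `(F₀ + z M) v = 0` with `v ≠ 0`, then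
`z = -(v* F₀ v) / (v* M v)` is a quotient of reals. But `1 - 2 t⁴` vanishes at the non-real
point `t = i · 2^(-1/4)`.
-/

open Polynomial
open scoped ComplexOrder

namespace Matrix

variable {n : Type*} [Fintype n] [DecidableEq n]

theorem PosDef.im_eq_zero_of_det_add_smul_eq_zero {𝕜 : Type*} [RCLike 𝕜] {A B : Matrix n n 𝕜}
    (hA : A.PosDef) (hB : B.IsHermitian) {z : 𝕜} (hz : (A + z • B).det = 0) :
    RCLike.im z = 0 := by
  obtain ⟨v, hv0, hv⟩ := exists_mulVec_eq_zero_iff.mpr hz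
  have hsum : star v ⬝ᵥ (A *ᵥ v) + z * (star v ⬝ᵥ (B *ᵥ v)) = 0 := by
    rw [← smul_eq_mul, ← dotProduct_smul, ← smul_mulVec, ← dotProduct_add, ← add_mulVec, hv,
      dotProduct_zero]
  obtain ⟨ha_re, ha_im⟩ := RCLike.pos_iff.mp (hA.dotProduct_mulVec_pos hv0)
  have hb_im := hB.im_star_dotProduct_mulVec_self v
  have hre := congrArg RCLike.re hsum
  have him := congrArg RCLike.im hsum
  simp only [map_add, RCLike.mul_re, RCLike.mul_im, ha_im, hb_im, map_zero] at hre him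
  have hb_re : RCLike.re (star v ⬝ᵥ (B *ᵥ v)) ≠ 0 := fun h => by
    rw [h] at hre
    linarith
  simpa [hb_re] using him

theorem PosSemidef.map_algebraMap {𝕜 : Type*} [RCLike 𝕜] {A : Matrix n n ℝ} (hA : A.PosSemidef) :
    (A.map (algebraMap ℝ 𝕜)).PosSemidef := by
  open scoped MatrixOrder in
  obtain ⟨B, rfl⟩ := CStarAlgebra.nonneg_iff_eq_star_mul_self.mp hA.nonneg
  rw [star_eq_conjTranspose, Matrix.map_mul,
    conjTranspose_map _ fun x => (RCLike.conj_ofReal x).symm]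
  exact posSemidef_conjTranspose_mul_self _

theorem aeval_det_map_C_add_X_smul {R S : Type*} [CommRing R] [CommRing S] [Algebra R S]
    (A B : Matrix n n R) (z : S) :
    aeval z (A.map C + (X : R[X]) • B.map C).det =
      (A.map (algebraMap R S) + z • B.map (algebraMap R S)).det := by
  rw [AlgHom.map_det]
  congr 1
  ext i j
  simp [Algebra.commutes]

theorem PosDef.im_eq_zero_of_aeval_eq_zero {A B : Matrix n n ℝ} (hA : A.PosDef) (hB : B.IsSymm)
    {p : ℝ[X]} (hp : ∀ t : ℝ, (A + t • B).det = p.eval t) {z : ℂ} (hz : aeval z p = 0) :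
    z.im = 0 := by
  have hpencil : (A.map C + (X : ℝ[X]) • B.map C).det = p := funext fun t => by
    simpa [← coe_aeval_eq_eval, aeval_det_map_C_add_X_smul] using hp t
  have hAℂ : (A.map (algebraMap ℝ ℂ)).PosDef := by
    rw [hA.posSemidef.map_algebraMap.posDef_iff_det_ne_zero, ← RingHom.mapMatrix_apply,
      ← RingHom.map_det]
    exact (_root_.map_ne_zero _).mpr hA.det_pos.ne'
  have hBℂ : (B.map (algebraMap ℝ ℂ)).IsHermitian :=
    (isHermitian_iff_isSymm.mpr hB).map _ fun x => (RCLike.conj_ofReal x).symm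
  exact hAℂ.im_eq_zero_of_det_add_smul_eq_zero hBℂ (by rwa [← aeval_det_map_C_add_X_smul, hpencil])

end Matrix

/-- There do not exist `m ≥ 1` and real symmetric `m × m` matrices
`F0, F1, F2` with `F0` positive semidefinite such that
`det (F0 + x1 • F1 + x2 • F2) = 1 − x1⁴ − x2⁴` for all `(x1, x2) ∈ ℝ²`. -/
theorem stmt16 :
    ¬ ∃ (m : ℕ), 1 ≤ m ∧ ∃ F0 F1 F2 : Matrix (Fin m) (Fin m) ℝ,
      F0.IsSymm ∧ F1.IsSymm ∧ F2.IsSymm ∧ F0.PosSemidef ∧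
      ∀ x1 x2 : ℝ, (F0 + x1 • F1 + x2 • F2).det = 1 - x1 ^ 4 - x2 ^ 4 := by
  rintro ⟨m, -, F0, F1, F2, -, hF1, hF2, hF0, hdet⟩
  have hdiag : ∀ t : ℝ, (F0 + t • (F1 + F2)).det = eval t (1 - 2 * X ^ 4 : ℝ[X]) := fun t => by
    rw [smul_add, ← add_assoc, hdet]
    simp only [eval_sub, eval_one, eval_mul, eval_ofNat, eval_pow, eval_X]
    ring
  have hF0pd : F0.PosDef :=
    hF0.posDef_iff_det_ne_zero.mpr (by simp [show F0.det = 1 by simpa using hdet 0 0])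
  obtain ⟨c, hc0, hc⟩ : ∃ c : ℝ, 0 < c ∧ c ^ 4 = 1 / 2 :=
    ⟨_, by positivity, Real.rpow_inv_natCast_pow (by norm_num) four_ne_zero⟩
  have hroot : aeval (Complex.I * c) (1 - 2 * X ^ 4 : ℝ[X]) = 0 := by
    simp [map_ofNat, mul_pow, ← Complex.ofReal_pow, hc]
  simpa [hc0.ne'] using hF0pd.im_eq_zero_of_aeval_eq_zero (hF1.add hF2) hdiag hroot
end

section
/- Let H0, H1, …, Hd be m×m real symmetric matrices and let P be any real symmetric dm×dm matrix. Define the (d+1)m×(d+1)m real symmetric matrix L(P) = H̃ + E1ᵀ·P·E1 − E2ᵀ·P·E2, where H̃ is the block matrix (with m×m blocks indexed by 0,…,d) whose (0,k) block and (k,0) block equal H_k for k = 0,…,d and whose remaining blocks are zero, E1 = [I_{dm} 0] selects the first dm coordinates and E2 = [0 I_{dm}] selects the last dm coordinates. Then for every z ∈ ℂ with |z| = 1, writing B(z) = [I_m; z·I_m; …; z^d·I_m] ∈ ℂ^{(d+1)m×m}, one has B(z)* · L(P) · B(z) = H0 + ∑_{k=1}^{d} H_k·(z^k + z^{−k}).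 Consequently, if L(P) is positive semidefinite for some symmetric P, then the Hermitian matrix H(z) = H0 + ∑_{k=1}^{d} H_k·(z^k + z^{−k}) is positive semidefinite for every z on the unit circle. -/
open Matrix ComplexOrder

/-!
Along `B z`, the selections satisfy `E₂ B(z) = z • E₁ B(z)`, so for `|z| = 1` the two
`P`-terms of `L(P)` contribute the same Hermitian form to `B(z)ᴴ L(P) B(z)` and cancel. What
remains is `B(z)ᴴ H̃ B(z)`: the `0`-th block row of `H̃` yields `∑ zˡ H l` and the `0`-th block
column yields `∑_{k>0} z⁻ᵏ H k`. Finally, positive semidefiniteness of the real matrix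
`L(P)` survives complexification and congruence by `B(z)`.
-/

namespace Matrix

variable {ι κ κ' n : Type*}

lemma transpose_map_ofReal (M : Matrix κ ι ℝ) :
    Mᵀ.map (algebraMap ℝ ℂ) = (M.map (algebraMap ℝ ℂ))ᴴ := by
  ext i j
  simp [conjTranspose_apply, Complex.conj_ofReal]

lemma PosSemidef.map_ofReal_s17 [Fintype n] [DecidableEq n] {A : Matrix n n ℝ}
    (hA : A.PosSemidef) :
    (A.map (algebraMap ℝ ℂ)).PosSemidef := by
  obtain ⟨C, rfl⟩ : ∃ C : Matrix n n ℝ, A = Cᴴ * C := by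
    open scoped MatrixOrder in exact CStarAlgebra.nonneg_iff_eq_star_mul_self.mp hA.nonneg
  rw [Matrix.map_mul (f := algebraMap ℝ ℂ), conjTranspose_eq_transpose_of_trivial,
    transpose_map_ofReal]
  exact posSemidef_conjTranspose_mul_self _

lemma conjTranspose_smul_mul_mul_smul {R : Type*} [CommSemiring R] [StarRing R] [Fintype κ]
    {z : R} (hz : star z * z = 1) (X : Matrix κ ι R) (Q : Matrix κ κ R) :
    (z • X)ᴴ * Q * (z • X) = Xᴴ * Q * X := by
  rw [conjTranspose_smul, Matrix.smul_mul, Matrix.smul_mul, Matrix.mul_smul, smul_smul, hz,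
    one_smul]

lemma mul_eq_submatrix_of_apply_eq_ite {R : Type*} [NonAssocSemiring R] [Fintype κ']
    [Fintype ι] [DecidableEq κ'] [DecidableEq ι] (f : κ → κ')
    (E : Matrix (κ × ι) (κ' × ι) R)
    (hE : ∀ k i l j, E (k, i) (l, j) = if f k = l ∧ i = j then 1 else 0)
    (M : Matrix (κ' × ι) n R) :
    E * M = M.submatrix (Prod.map f id) id := by
  ext ⟨k, i⟩ j
  simp [mul_apply, Fintype.sum_prod_type, hE, ite_and]

lemma conjTranspose_mul_mul_apply_of_apply_eq_ite {R : Type*} [CommSemiring R] [StarRing R]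
    [Fintype κ] [Fintype n] [DecidableEq n] (w : κ → R) (B : Matrix (κ × n) n R)
    (hB : ∀ k i j, B (k, i) j = if i = j then w k else 0)
    (M : Matrix (κ × n) (κ × n) R) (i j : n) :
    (Bᴴ * M * B) i j = ∑ k, ∑ l, star (w k) * M (k, i) (l, j) * w l := by
  simp only [mul_apply, conjTranspose_apply, hB, apply_ite star, star_zero, ite_mul, zero_mul,
    Fintype.sum_prod_type, Finset.sum_ite_eq', Finset.mem_univ, ↓reduceIte, mul_ite,
    Finset.sum_mul, mul_zero]
  exact Finset.sum_comm

lemma conjTranspose_mul_map_transpose_mul_mul [Fintype κ] [Fintype κ'] (X : Matrix κ' n ℂ)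
    (E : Matrix κ κ' ℝ) (P : Matrix κ κ ℝ) :
    Xᴴ * (Eᵀ * P * E).map (algebraMap ℝ ℂ) * X =
      (E.map (algebraMap ℝ ℂ) * X)ᴴ * P.map (algebraMap ℝ ℂ) *
        (E.map (algebraMap ℝ ℂ) * X) := by
  simp only [Matrix.map_mul, transpose_map_ofReal, conjTranspose_mul, Matrix.mul_assoc]

lemma conjTranspose_mul_map_mul_of_shift [Fintype κ] [Fintype κ'] (Ht : Matrix κ' κ' ℝ)
    (P : Matrix κ κ ℝ) (E₁ E₂ : Matrix κ κ' ℝ) (X : Matrix κ' n ℂ) {z : ℂ} (hz : ‖z‖ = 1)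
    (hX : E₂.map (algebraMap ℝ ℂ) * X = z • (E₁.map (algebraMap ℝ ℂ) * X)) :
    Xᴴ * (Ht + E₁ᵀ * P * E₁ - E₂ᵀ * P * E₂).map (algebraMap ℝ ℂ) * X =
      Xᴴ * Ht.map (algebraMap ℝ ℂ) * X := by
  have hz' : star z * z = 1 := by
    rw [Complex.star_def, Complex.conj_mul', hz]; norm_num
  rw [Matrix.map_sub _ (map_sub _), Matrix.map_add _ (map_add _), Matrix.mul_sub,
    Matrix.mul_add, Matrix.sub_mul, Matrix.add_mul, conjTranspose_mul_map_transpose_mul_mul,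
    conjTranspose_mul_map_transpose_mul_mul, hX, conjTranspose_smul_mul_mul_smul hz',
    add_sub_cancel_right]

end Matrix

lemma Fin.sum_sum_arrowhead {R : Type*} [CommSemiring R] {d : ℕ} (a v w : Fin (d + 1) → R)
    (hv : v 0 = 1) (hw : w 0 = 1) :
    ∑ k, ∑ l, v k * (if k = 0 then a l else if l = 0 then a k else 0) * w l =
      a 0 + ∑ k ∈ Finset.Ioi 0, (w k + v k) * a k := by
  simp only [mul_ite, mul_zero, ite_mul, zero_mul, Finset.sum_ite_irrel, sum_univ_succ, hw,
    mul_one, Finset.sum_ite_eq', Finset.mem_univ, ↓reduceIte, hv, one_mul, succ_ne_zero,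
    Ioi_zero_eq_map, add_mul, mul_comm (w _), Finset.sum_add_distrib, Finset.sum_map,
    coe_succEmb]
  ring

lemma conjTranspose_mul_arrowhead_mul {d m : ℕ} (H : Fin (d + 1) → Matrix (Fin m) (Fin m) ℝ)
    (Ht : Matrix (Fin (d + 1) × Fin m) (Fin (d + 1) × Fin m) ℝ)
    (hHt : ∀ k l i j,
      Ht (k, i) (l, j) = if k = 0 then H l i j else if l = 0 then H k i j else 0)
    {z : ℂ} (hz : ‖z‖ = 1) (B : Matrix (Fin (d + 1) × Fin m) (Fin m) ℂ)
    (hB : ∀ k i j, B (k, i) j = if i = j then z ^ (k : ℕ) else 0) :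
    Bᴴ * Ht.map (algebraMap ℝ ℂ) * B =
      (H 0).map (algebraMap ℝ ℂ) + ∑ k ∈ Finset.Ioi (0 : Fin (d + 1)),
        (z ^ (k : ℕ) + z⁻¹ ^ (k : ℕ)) • (H k).map (algebraMap ℝ ℂ) := by
  ext i j
  rw [conjTranspose_mul_mul_apply_of_apply_eq_ite _ B hB]
  simp only [map_apply, hHt, apply_ite (algebraMap ℝ ℂ), map_zero, star_pow,
    Complex.star_def, ← Complex.inv_eq_conj hz]
  rw [Fin.sum_sum_arrowhead _ _ _ (by simp) (by simp)]
  simp [Matrix.sum_apply]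

theorem stmt17_general (d m : ℕ) (H : Fin (d + 1) → Matrix (Fin m) (Fin m) ℝ)
    (P : Matrix (Fin d × Fin m) (Fin d × Fin m) ℝ)
    (Htilde : Matrix (Fin (d + 1) × Fin m) (Fin (d + 1) × Fin m) ℝ)
    (hHt : ∀ (k l : Fin (d + 1)) (i j : Fin m),
      Htilde (k, i) (l, j) = if k = 0 then H l i j else if l = 0 then H k i j else 0)
    (E1 E2 : Matrix (Fin d × Fin m) (Fin (d + 1) × Fin m) ℝ)
    (hE1 : ∀ (k : Fin d) (i : Fin m) (l : Fin (d + 1)) (j : Fin m),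
      E1 (k, i) (l, j) = if k.castSucc = l ∧ i = j then 1 else 0)
    (hE2 : ∀ (k : Fin d) (i : Fin m) (l : Fin (d + 1)) (j : Fin m),
      E2 (k, i) (l, j) = if k.succ = l ∧ i = j then 1 else 0)
    (L : Matrix (Fin (d + 1) × Fin m) (Fin (d + 1) × Fin m) ℝ)
    (hL : L = Htilde + E1ᵀ * P * E1 - E2ᵀ * P * E2)
    (B : ℂ → Matrix (Fin (d + 1) × Fin m) (Fin m) ℂ)
    (hB : ∀ (z : ℂ) (k : Fin (d + 1)) (i j : Fin m),
      B z (k, i) j = if i = j then z ^ (k : ℕ) else 0) :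
    (∀ z : ℂ, ‖z‖ = 1 →
      (B z)ᴴ * L.map (algebraMap ℝ ℂ) * B z =
        (H 0).map (algebraMap ℝ ℂ) +
          ∑ k ∈ Finset.Ioi (0 : Fin (d + 1)),
            (z ^ (k : ℕ) + z⁻¹ ^ (k : ℕ)) • (H k).map (algebraMap ℝ ℂ)) ∧
    (L.PosSemidef → ∀ z : ℂ, ‖z‖ = 1 →
      ((H 0).map (algebraMap ℝ ℂ) +
        ∑ k ∈ Finset.Ioi (0 : Fin (d + 1)),
          (z ^ (k : ℕ) + z⁻¹ ^ (k : ℕ)) • (H k).map (algebraMap ℝ ℂ)).PosSemidef) := by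
  have hShift (z : ℂ) :
      E2.map (algebraMap ℝ ℂ) * B z = z • (E1.map (algebraMap ℝ ℂ) * B z) := by
    rw [mul_eq_submatrix_of_apply_eq_ite Fin.succ _
        (by simp [hE2, apply_ite ((↑) : ℝ → ℂ)]),
      mul_eq_submatrix_of_apply_eq_ite Fin.castSucc _
        (by simp [hE1, apply_ite ((↑) : ℝ → ℂ)])]
    ext ⟨k, i⟩ j
    simp [hB, pow_succ, mul_comm z]
  have hCancel (z : ℂ) (hz : ‖z‖ = 1) :
      (B z)ᴴ * L.map (algebraMap ℝ ℂ) * B z = (B z)ᴴ * Htilde.map (algebraMap ℝ ℂ) * B z := by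
    rw [hL, conjTranspose_mul_map_mul_of_shift _ _ _ _ _ hz (hShift z)]
  have hQuad := fun z (hz : ‖z‖ = 1) =>
    (hCancel z hz).trans (conjTranspose_mul_arrowhead_mul H Htilde hHt hz _ (hB z))
  exact ⟨hQuad, fun hLpsd z hz => hQuad z hz ▸ hLpsd.map_ofReal_s17.conjTranspose_mul_mul_same _⟩

/-- Let `H0, …, Hd` be `m × m` real symmetric matrices, `P` a real
symmetric `dm × dm` matrix, and `L(P) = H̃ + E1ᵀ P E1 − E2ᵀ P E2`, where `H̃` has
`(0,k)` and `(k,0)` blocks equal to `H k` and zero blocks elsewhere, `E1` selects the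
first `dm` coordinates and `E2` the last `dm` coordinates. Then for every `z` on the
unit circle, with `B z = [I; z I; …; z^d I]`, one has
`(B z)ᴴ L(P) (B z) = H0 + ∑_{k=1}^d (z^k + z^{−k}) H k`. Consequently, if `L(P)` is
positive semidefinite, then `H(z) = H0 + ∑_{k=1}^d (z^k + z^{−k}) H k` is positive
semidefinite for every `z` on the unit circle. -/
theorem stmt17 (d m : ℕ) (H : Fin (d + 1) → Matrix (Fin m) (Fin m) ℝ)
    (hHsymm : ∀ k, (H k).IsSymm)
    (P : Matrix (Fin d × Fin m) (Fin d × Fin m) ℝ) (hPsymm : P.IsSymm)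
    (Htilde : Matrix (Fin (d + 1) × Fin m) (Fin (d + 1) × Fin m) ℝ)
    (hHt : ∀ (k l : Fin (d + 1)) (i j : Fin m),
      Htilde (k, i) (l, j) = if k = 0 then H l i j else if l = 0 then H k i j else 0)
    (E1 E2 : Matrix (Fin d × Fin m) (Fin (d + 1) × Fin m) ℝ)
    (hE1 : ∀ (k : Fin d) (i : Fin m) (l : Fin (d + 1)) (j : Fin m),
      E1 (k, i) (l, j) = if k.castSucc = l ∧ i = j then 1 else 0)
    (hE2 : ∀ (k : Fin d) (i : Fin m) (l : Fin (d + 1)) (j : Fin m),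
      E2 (k, i) (l, j) = if k.succ = l ∧ i = j then 1 else 0)
    (L : Matrix (Fin (d + 1) × Fin m) (Fin (d + 1) × Fin m) ℝ)
    (hL : L = Htilde + E1ᵀ * P * E1 - E2ᵀ * P * E2)
    (B : ℂ → Matrix (Fin (d + 1) × Fin m) (Fin m) ℂ)
    (hB : ∀ (z : ℂ) (k : Fin (d + 1)) (i j : Fin m),
      B z (k, i) j = if i = j then z ^ (k : ℕ) else 0) :
    (∀ z : ℂ, ‖z‖ = 1 →
      (B z)ᴴ * L.map (algebraMap ℝ ℂ) * B z =
        (H 0).map (algebraMap ℝ ℂ) +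
          ∑ k ∈ Finset.Ioi (0 : Fin (d + 1)),
            (z ^ (k : ℕ) + z⁻¹ ^ (k : ℕ)) • (H k).map (algebraMap ℝ ℂ)) ∧
    (L.PosSemidef → ∀ z : ℂ, ‖z‖ = 1 →
      ((H 0).map (algebraMap ℝ ℂ) +
        ∑ k ∈ Finset.Ioi (0 : Fin (d + 1)),
          (z ^ (k : ℕ) + z⁻¹ ^ (k : ℕ)) • (H k).map (algebraMap ℝ ℂ)).PosSemidef) :=
  stmt17_general d m H P Htilde hHt E1 E2 hE1 hE2 L hL B hB
end
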